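/- arXiv:2204.00474 — 6 statements merged into one kernel-verified Lean document; each statement's English description precedes it below -/
import Mathlib

section
/- The minimizer over probability density functions p of the sum of KL divergences ∑_{i=1}^N D_KL(p ∥ p_i) is the logarithmic opinion pool: p*(x) = ∏_i p_i(x)^{1/N} / ∫ ∏_i p_i(x)^{1/N} dx. -/
open MeasureTheory Real Finset

/-!
For any `r > 0`, `∑ i, q log (q / p i) = N q log (q / r) + q ∑ i, log (r / p i)`. For the pool
`r = p⋆` the last sum is the constant `-N log Z`, since `log g` is the mean of the `log (p i)`.
Integrating, `∑ i, D_KL(p⋆ ∥ p i) = -N log Z`, while for `q` the pointwise Gibbs inequality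
`q log (q / p⋆) ≥ q - p⋆` gives `∑ i, D_KL(q ∥ p i) ≥ N (1 - 1) - N log Z`.
-/

lemma sub_le_mul_log_div {a b : ℝ} (ha : 0 ≤ a) (hb : 0 < b) : a - b ≤ a * log (a / b) := by
  rcases ha.eq_or_lt with rfl | ha
  · simpa using hb.le
  · have := one_sub_inv_le_log_of_pos (div_pos ha hb)
    rw [inv_div] at this
    calc a - b = a * (1 - b / a) := by field_simp
      _ ≤ a * log (a / b) := by gcongr

lemma mul_log_div_eq_add {q c a : ℝ} (hc : c ≠ 0) (ha : a ≠ 0) :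
    q * log (q / a) = q * log (q / c) + q * log (c / a) := by
  rcases eq_or_ne q 0 with rfl | hq
  · simp
  · rw [log_div hq ha, log_div hq hc, log_div hc ha]
    ring

lemma sum_log_geomMean_div_div {N : ℕ} {a : Fin N → ℝ} (ha : ∀ i, 0 < a i) {Z : ℝ}
    (hZ : 0 < Z) :
    ∑ i, log ((∏ j, a j ^ ((1 : ℝ) / N)) / Z / a i) = -(N * log Z) := by
  rcases N.eq_zero_or_pos with rfl | hN
  · simp
  have hprod : log (∏ j, a j ^ ((1 : ℝ) / N)) = (1 / N) * ∑ j, log (a j) := by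
    rw [log_prod fun j _ => (rpow_pos_of_pos (ha j) _).ne', mul_sum]
    exact sum_congr rfl fun j _ => log_rpow (ha j) _
  have hprod_pos : 0 < ∏ j, a j ^ ((1 : ℝ) / N) :=
    prod_pos fun j _ => rpow_pos_of_pos (ha j) _
  simp_rw [log_div (div_pos hprod_pos hZ).ne' (ha _).ne', log_div hprod_pos.ne' hZ.ne',
    sum_sub_distrib, sum_const, card_univ, Fintype.card_fin, nsmul_eq_mul, hprod]
  field_simp
  ring

section

variable {α ι : Type*} [MeasurableSpace α] {μ : Measure α} {s : Finset ι}
  {p : ι → α → ℝ} {r q : α → ℝ} {C : ℝ}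

lemma sum_integral_mul_log_div_eq (hr_prob : ∫ x, r x ∂μ = 1)
    (hr_kl : ∀ i ∈ s, Integrable (fun x => r x * log (r x / p i x)) μ)
    (hC : ∀ x, ∑ i ∈ s, log (r x / p i x) = C) :
    ∑ i ∈ s, ∫ x, r x * log (r x / p i x) ∂μ = C := by
  simp_rw [← integral_finsetSum _ hr_kl, ← mul_sum, hC]
  rw [integral_mul_const, hr_prob, one_mul]

lemma le_sum_integral_mul_log_div (hp : ∀ i ∈ s, ∀ x, p i x ≠ 0) (hr : ∀ x, 0 < r x)
    (hr_prob : ∫ x, r x ∂μ = 1) (hq : ∀ x, 0 ≤ q x) (hq_prob : ∫ x, q x ∂μ = 1)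
    (hq_kl : ∀ i ∈ s, Integrable (fun x => q x * log (q x / p i x)) μ)
    (hC : ∀ x, ∑ i ∈ s, log (r x / p i x) = C) :
    C ≤ ∑ i ∈ s, ∫ x, q x * log (q x / p i x) ∂μ := by
  have hq_int : Integrable q μ := .of_integral_ne_zero (by simp [hq_prob])
  have hr_int : Integrable r μ := .of_integral_ne_zero (by simp [hr_prob])
  have hgibbs x : #s * (q x - r x) + q x * C ≤ ∑ i ∈ s, q x * log (q x / p i x) := by
    rw [sum_congr rfl fun i hi => mul_log_div_eq_add (hr x).ne' (hp i hi x), sum_add_distrib,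
      ← mul_sum s (fun i => log (r x / p i x)), hC, sum_const, nsmul_eq_mul]
    gcongr
    exact sub_le_mul_log_div (hq x) (hr x)
  have hlower : ∫ x, (#s * (q x - r x) + q x * C) ∂μ = C := by
    rw [integral_add (f := fun x => #s * (q x - r x)) ((hq_int.sub hr_int).const_mul _)
      (hq_int.mul_const _), integral_const_mul, integral_mul_const, integral_sub hq_int hr_int,
      hq_prob, hr_prob]
    ring
  calc C = ∫ x, (#s * (q x - r x) + q x * C) ∂μ := hlower.symm
    _ ≤ ∫ x, ∑ i ∈ s, q x * log (q x / p i x) ∂μ :=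
      integral_mono (((hq_int.sub hr_int).const_mul _).add (hq_int.mul_const _))
        (integrable_finsetSum _ hq_kl) hgibbs
    _ = ∑ i ∈ s, ∫ x, q x * log (q x / p i x) ∂μ := integral_finsetSum _ hq_kl

end

theorem logop_minimizes_sum_kl_general
    {α : Type*} [MeasurableSpace α] (μ : Measure α)
    (N : ℕ) (p : Fin N → α → ℝ)
    (hp_pos : ∀ i, ∀ x, 0 < p i x)
    (g : α → ℝ) (hg : g = fun x => ∏ i, (p i x) ^ ((1 : ℝ) / N))
    (Z : ℝ) (hZ : Z = ∫ x, g x ∂μ) (hZ_pos : 0 < Z)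
    (pstar : α → ℝ) (hpstar : pstar = fun x => g x / Z)
    (hps_kl : ∀ i, Integrable (fun x => pstar x * Real.log (pstar x / p i x)) μ)
    (q : α → ℝ) (hq_nonneg : ∀ x, 0 ≤ q x)
    (hq_prob : ∫ x, q x ∂μ = 1)
    (hq_kl : ∀ i, Integrable (fun x => q x * Real.log (q x / p i x)) μ) :
    ∑ i, ∫ x, pstar x * Real.log (pstar x / p i x) ∂μ ≤
      ∑ i, ∫ x, q x * Real.log (q x / p i x) ∂μ := by
  subst hg hpstar
  have hps_pos x : 0 < (∏ i, p i x ^ ((1 : ℝ) / N)) / Z :=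
    div_pos (prod_pos fun i _ => rpow_pos_of_pos (hp_pos i x) _) hZ_pos
  have hps_prob : ∫ x, (∏ i, p i x ^ ((1 : ℝ) / N)) / Z ∂μ = 1 := by
    rw [integral_div, ← hZ, div_self hZ_pos.ne']
  have hpool x := sum_log_geomMean_div_div (hp_pos · x) hZ_pos
  calc _ = -(N * log Z) := sum_integral_mul_log_div_eq hps_prob (fun i _ => hps_kl i) hpool
    _ ≤ _ := le_sum_integral_mul_log_div (fun i _ => (hp_pos i · |>.ne')) hps_pos hps_prob
        hq_nonneg hq_prob (fun i _ => hq_kl i) hpool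

/-- The minimizer over probability densities `q` of the sum of
KL divergences `∑ i, D_KL(q ∥ p i)` is the logarithmic opinion pool
`p⋆ = (∏ i, p i ^ (1/N)) / Z`. -/
theorem logop_minimizes_sum_kl
    {α : Type*} [MeasurableSpace α] (μ : Measure α) [SigmaFinite μ]
    (N : ℕ) (hN : 0 < N) (p : Fin N → α → ℝ)
    (hp_meas : ∀ i, Measurable (p i))
    (hp_pos : ∀ i, ∀ x, 0 < p i x)
    (hp_prob : ∀ i, ∫ x, p i x ∂μ = 1)
    (g : α → ℝ) (hg : g = fun x => ∏ i, (p i x) ^ ((1 : ℝ) / N))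
    (hg_int : Integrable g μ)
    (Z : ℝ) (hZ : Z = ∫ x, g x ∂μ) (hZ_pos : 0 < Z)
    (pstar : α → ℝ) (hpstar : pstar = fun x => g x / Z)
    (hps_kl : ∀ i, Integrable (fun x => pstar x * Real.log (pstar x / p i x)) μ)
    (q : α → ℝ) (hq_meas : Measurable q) (hq_nonneg : ∀ x, 0 ≤ q x)
    (hq_prob : ∫ x, q x ∂μ = 1)
    (hq_ac : ∀ i, ∀ᵐ x ∂μ, p i x = 0 → q x = 0)
    (hq_kl : ∀ i, Integrable (fun x => q x * Real.log (q x / p i x)) μ) :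
    ∑ i, ∫ x, pstar x * Real.log (pstar x / p i x) ∂μ ≤
      ∑ i, ∫ x, q x * Real.log (q x / p i x) ∂μ :=
  logop_minimizes_sum_kl_general μ N p hp_pos g hg Z hZ hZ_pos pstar hpstar hps_kl q hq_nonneg
    hq_prob hq_kl
end

section
/- For any density p and finitely many densities p_1,...,p_N, the objective ∑_i D_KL(p ∥ p_i) decomposes as N·D_KL(p ∥ p*) + constant, where p* is the normalized geometric mean of the p_i; hence p* is the unique minimizer (up to almost-everywhere equality). -/
open MeasureTheory Real Finset InformationTheory

/-!
Since `log p⋆ = (1/N) ∑ᵢ log pᵢ - log Z`, the pointwise identity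
`∑ᵢ p log (p / pᵢ) = N · p log (p / p⋆) - N log Z · p` holds, and integrating it against a
density gives the decomposition. Applied to `p⋆` itself (whose divergence from itself is `0`),
it shows the objective at `p⋆` is `-N log Z`, so any `p` doing at least as well has
`D_KL(p ∥ p⋆) ≤ 0`. Gibbs' inequality in the form `p⋆ · klFun (p / p⋆) ≥ 0`, with equality only
where `p = p⋆`, then forces `p = p⋆` almost everywhere.
-/

section GeomMean

variable {ι α : Type*} [Fintype ι]

noncomputable def normalizedGeomMean (a : ι → α → ℝ) (Z : ℝ) (x : α) : ℝ :=
  (∏ i, a i x ^ ((1 : ℝ) / Fintype.card ι)) / Z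

lemma normalizedGeomMean_pos {a : ι → α → ℝ} (ha : ∀ i x, 0 < a i x) {Z : ℝ} (hZ : 0 < Z)
    (x : α) : 0 < normalizedGeomMean a Z x :=
  div_pos (prod_pos fun i _ => rpow_pos_of_pos (ha i x) _) hZ

lemma log_normalizedGeomMean {a : ι → α → ℝ} (ha : ∀ i x, 0 < a i x) {Z : ℝ} (hZ : 0 < Z)
    (x : α) :
    log (normalizedGeomMean a Z x) = (∑ i, log (a i x)) / Fintype.card ι - log Z := by
  have hprod : (∏ i, a i x ^ ((1 : ℝ) / Fintype.card ι)) ≠ 0 :=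
    (prod_pos fun i _ => rpow_pos_of_pos (ha i x) _).ne'
  rw [normalizedGeomMean, log_div hprod hZ.ne',
    log_prod fun i _ => (rpow_pos_of_pos (ha i x) _).ne']
  simp only [log_rpow (ha _ x), ← mul_sum]
  ring

lemma sum_mul_log_div_eq {a : ι → α → ℝ} (ha : ∀ i x, 0 < a i x) {Z : ℝ} (hZ : 0 < Z)
    {q : ℝ} (hq : 0 ≤ q) (x : α) :
    ∑ i, q * log (q / a i x) =
      Fintype.card ι * (q * log (q / normalizedGeomMean a Z x)) -
        Fintype.card ι * log Z * q := by
  rcases hq.eq_or_lt with rfl | hq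
  · simp
  have hS : (Fintype.card ι : ℝ) * ((∑ i, log (a i x)) / Fintype.card ι) = ∑ i, log (a i x) := by
    rcases isEmpty_or_nonempty ι with hι | hι
    · simp
    · exact mul_div_cancel₀ _ (Nat.cast_ne_zero.mpr Fintype.card_ne_zero)
  simp only [log_div hq.ne' (ha _ x).ne', log_div hq.ne' (normalizedGeomMean_pos ha hZ x).ne',
    log_normalizedGeomMean ha hZ, mul_sub, sum_sub_distrib, ← mul_sum, sum_const, card_univ,
    nsmul_eq_mul]
  linear_combination q * hS

variable [MeasurableSpace α] {μ : Measure α}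

lemma sum_integral_mul_log_div_eq_s1 {a : ι → α → ℝ} (ha : ∀ i x, 0 < a i x) {Z : ℝ} (hZ : 0 < Z)
    {q : α → ℝ} (hq : ∀ x, 0 ≤ q x) (hq_prob : ∫ x, q x ∂μ = 1)
    (hq_kl : ∀ i, Integrable (fun x => q x * log (q x / a i x)) μ)
    (hq_klstar : Integrable (fun x => q x * log (q x / normalizedGeomMean a Z x)) μ) :
    ∑ i, ∫ x, q x * log (q x / a i x) ∂μ =
      Fintype.card ι * ∫ x, q x * log (q x / normalizedGeomMean a Z x) ∂μ -
        Fintype.card ι * log Z := by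
  have hq_int : Integrable q μ := Integrable.of_integral_ne_zero (by simp [hq_prob])
  rw [← integral_finsetSum _ fun i _ => hq_kl i]
  simp only [sum_mul_log_div_eq ha hZ (hq _)]
  rw [integral_sub (hq_klstar.const_mul _) (hq_int.const_mul _), integral_const_mul,
    integral_const_mul, hq_prob, mul_one]

end GeomMean

section Gibbs

variable {α : Type*} [MeasurableSpace α] {μ : Measure α}

lemma mul_klFun_div (p : ℝ) {q : ℝ} (hq : q ≠ 0) :
    q * klFun (p / q) = p * log (p / q) + q - p := by
  rw [klFun_apply]
  field_simp

lemma ae_eq_of_integral_mul_log_div_nonpos {p q : α → ℝ} (hp : ∀ x, 0 ≤ p x)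
    (hq : ∀ x, 0 < q x) (hp_prob : ∫ x, p x ∂μ = 1) (hq_prob : ∫ x, q x ∂μ = 1)
    (hkl : Integrable (fun x => p x * log (p x / q x)) μ)
    (hle : ∫ x, p x * log (p x / q x) ∂μ ≤ 0) : p =ᵐ[μ] q := by
  have hp_int : Integrable p μ := Integrable.of_integral_ne_zero (by simp [hp_prob])
  have hq_int : Integrable q μ := Integrable.of_integral_ne_zero (by simp [hq_prob])
  set F : α → ℝ := fun x => q x * klFun (p x / q x)
  have hF_eq : F = fun x => p x * log (p x / q x) + q x - p x :=
    funext fun x => mul_klFun_div _ (hq x).ne'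
  have hF_nonneg : ∀ x, 0 ≤ F x :=
    fun x => mul_nonneg (hq x).le (klFun_nonneg (div_nonneg (hp x) (hq x).le))
  have hF_int : Integrable F μ := hF_eq ▸ (hkl.add hq_int).sub hp_int
  have hF_integral : ∫ x, F x ∂μ = ∫ x, p x * log (p x / q x) ∂μ := by
    simp only [hF_eq]
    rw [integral_sub (f := fun x => p x * log (p x / q x) + q x) (hkl.add hq_int) hp_int,
      integral_add hkl hq_int, hq_prob, hp_prob]
    ring
  have hF_zero : F =ᵐ[μ] 0 := (integral_eq_zero_iff_of_nonneg hF_nonneg hF_int).mp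
    (le_antisymm (hF_integral ▸ hle) (integral_nonneg hF_nonneg))
  filter_upwards [hF_zero] with x hx
  have hkl_zero : klFun (p x / q x) = 0 := (mul_eq_zero.mp hx).resolve_left (hq x).ne'
  exact (div_eq_one_iff_eq (hq x).ne').mp
    ((klFun_eq_zero_iff (div_nonneg (hp x) (hq x).le)).mp hkl_zero)

end Gibbs

theorem sum_kl_decomposition_and_unique_minimizer_general
    {α : Type*} [MeasurableSpace α] (μ : Measure α)
    (N : ℕ) (hN : 0 < N) (p' : Fin N → α → ℝ)
    (hp'_pos : ∀ i, ∀ x, 0 < p' i x)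
    (g : α → ℝ) (hg : g = fun x => ∏ i, (p' i x) ^ ((1 : ℝ) / N))
    (Z : ℝ) (hZ : Z = ∫ x, g x ∂μ) (hZ_pos : 0 < Z)
    (pstar : α → ℝ) (hpstar : pstar = fun x => g x / Z)
    (hps_kl : ∀ i, Integrable (fun x => pstar x * Real.log (pstar x / p' i x)) μ)
    (p : α → ℝ) (hp_nonneg : ∀ x, 0 ≤ p x)
    (hp_prob : ∫ x, p x ∂μ = 1)
    (hp_kl : ∀ i, Integrable (fun x => p x * Real.log (p x / p' i x)) μ)
    (hp_klstar : Integrable (fun x => p x * Real.log (p x / pstar x)) μ) :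
    (∑ i, ∫ x, p x * Real.log (p x / p' i x) ∂μ =
        N * (∫ x, p x * Real.log (p x / pstar x) ∂μ) - N * Real.log Z) ∧
    ((∑ i, ∫ x, p x * Real.log (p x / p' i x) ∂μ ≤
        ∑ i, ∫ x, pstar x * Real.log (pstar x / p' i x) ∂μ) →
      p =ᵐ[μ] pstar) := by
  have hpstar_eq : pstar = normalizedGeomMean p' Z := by
    subst hpstar hg
    ext x
    simp [normalizedGeomMean]
  have hps_prob : ∫ x, pstar x ∂μ = 1 := by
    rw [hpstar, integral_div, ← hZ, div_self hZ_pos.ne']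
  have hps_pos : ∀ x, 0 < pstar x := hpstar_eq ▸ normalizedGeomMean_pos hp'_pos hZ_pos
  have hp_decomp := sum_integral_mul_log_div_eq_s1 hp'_pos hZ_pos hp_nonneg hp_prob hp_kl
    (hpstar_eq ▸ hp_klstar)
  rw [Fintype.card_fin, ← hpstar_eq] at hp_decomp
  refine ⟨hp_decomp, fun hle => ?_⟩
  have hps_self : ∀ x, pstar x * log (pstar x / pstar x) = 0 := fun x => by
    rw [div_self (hps_pos x).ne', log_one, mul_zero]
  have hps_decomp := sum_integral_mul_log_div_eq_s1 hp'_pos hZ_pos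
    (hpstar_eq ▸ fun x => (hps_pos x).le) (hpstar_eq ▸ hps_prob) (hpstar_eq ▸ hps_kl)
    (by simp only [← hpstar_eq, hps_self]; exact integrable_zero _ _ _)
  simp only [Fintype.card_fin, ← hpstar_eq, hps_self, integral_zero, mul_zero, zero_sub]
    at hps_decomp
  rw [hp_decomp, hps_decomp] at hle
  exact ae_eq_of_integral_mul_log_div_nonpos hp_nonneg hps_pos hp_prob hps_prob hp_klstar
    (nonpos_of_mul_nonpos_right (by linarith) (Nat.cast_pos.mpr hN))

/-- For any density `p` and densities `p₁, …, p_N`, the objective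
`∑ i, D_KL(p ∥ p i)` decomposes as `N · D_KL(p ∥ p⋆) + constant` where
`p⋆` is the normalized geometric mean of the `p i`; hence `p⋆` is the unique
minimizer up to almost-everywhere equality. -/
theorem sum_kl_decomposition_and_unique_minimizer
    {α : Type*} [MeasurableSpace α] (μ : Measure α) [SigmaFinite μ]
    (N : ℕ) (hN : 0 < N) (p' : Fin N → α → ℝ)
    (hp'_meas : ∀ i, Measurable (p' i))
    (hp'_pos : ∀ i, ∀ x, 0 < p' i x)
    (hp'_prob : ∀ i, ∫ x, p' i x ∂μ = 1)
    (g : α → ℝ) (hg : g = fun x => ∏ i, (p' i x) ^ ((1 : ℝ) / N))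
    (hg_int : Integrable g μ)
    (Z : ℝ) (hZ : Z = ∫ x, g x ∂μ) (hZ_pos : 0 < Z)
    (pstar : α → ℝ) (hpstar : pstar = fun x => g x / Z)
    (hps_kl : ∀ i, Integrable (fun x => pstar x * Real.log (pstar x / p' i x)) μ)
    (p : α → ℝ) (hp_meas : Measurable p) (hp_nonneg : ∀ x, 0 ≤ p x)
    (hp_prob : ∫ x, p x ∂μ = 1)
    (hp_kl : ∀ i, Integrable (fun x => p x * Real.log (p x / p' i x)) μ)
    (hp_klstar : Integrable (fun x => p x * Real.log (p x / pstar x)) μ) :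
    (∑ i, ∫ x, p x * Real.log (p x / p' i x) ∂μ =
        N * (∫ x, p x * Real.log (p x / pstar x) ∂μ) - N * Real.log Z) ∧
    ((∑ i, ∫ x, p x * Real.log (p x / p' i x) ∂μ ≤
        ∑ i, ∫ x, pstar x * Real.log (pstar x / p' i x) ∂μ) →
      p =ᵐ[μ] pstar) :=
  sum_kl_decomposition_and_unique_minimizer_general μ N hN p' hp'_pos g hg Z hZ hZ_pos pstar hpstar
    hps_kl p hp_nonneg hp_prob hp_kl hp_klstar
end

section
/- Covariance intersection is consistent: if estimates (x_i, P_i) satisfy E[(x - x_i)(x - x_i)^T] ⪯ P_i for i = 1,...,m, and weights w_i ≥ 0 sum to 1 with fused inverse covariance P̄^{-1} = ∑_i w_i P_i^{-1} and fused mean x̄ = P̄ ∑_i w_i P_i^{-1} x_i, then E[(x - x̄)(x - x̄)^T] ⪯ P̄. -/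
/-!
With `Aᵢ = P̄ Pᵢ⁻¹`, the fused error is the convex combination `x - x̄ = ∑ wᵢ Aᵢ (x - xᵢ)`,
because `P̄ ∑ wᵢ Pᵢ⁻¹ = 1`. The second moment `e ↦ E[e eᵀ]` is convex in the Loewner order
(its quadratic forms are `E[(zᵀe)²]`), so
`E[(x - x̄)(x - x̄)ᵀ] ⪯ ∑ wᵢ Aᵢ E[(x - xᵢ)(x - xᵢ)ᵀ] Aᵢᵀ ⪯ ∑ wᵢ Aᵢ Pᵢ Aᵢᵀ = P̄ (∑ wᵢ Pᵢ⁻¹) P̄ = P̄`.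
-/

open MeasureTheory Matrix Finset

open scoped MatrixOrder

theorem dotProduct_mul_dotProduct_eq_sum {n : Type*} [Fintype n] (a b v : n → ℝ) :
    (a ⬝ᵥ v) * (b ⬝ᵥ v) = ∑ k, ∑ l, a k * b l * (v k * v l) := by
  simp only [dotProduct, sum_mul_sum]
  exact sum_congr rfl fun k _ => sum_congr rfl fun l _ => by ring

theorem Matrix.mul_mul_transpose_le_mul_mul_transpose {n κ : Type*} [Fintype n] [Fintype κ]
    {M P : Matrix n n ℝ} (h : M ≤ P) (A : Matrix κ n ℝ) : A * M * Aᵀ ≤ A * P * Aᵀ := by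
  rw [le_iff, ← Matrix.sub_mul, ← Matrix.mul_sub, ← conjTranspose_eq_transpose_of_trivial]
  exact (le_iff.mp h).mul_mul_conjTranspose_same A

theorem Matrix.posDef_sum_smul {ι n : Type*} [Fintype ι] [Fintype n] {A : ι → Matrix n n ℝ}
    {w : ι → ℝ} (hA : ∀ i, (A i).PosDef) (hw : ∀ i, 0 ≤ w i) (hw_sum : ∑ i, w i ≠ 0) :
    (∑ i, w i • A i).PosDef := by
  classical
  rw [← sum_filter_of_ne (p := fun i => w i ≠ 0) fun i _ h hi => h (by rw [hi, zero_smul])]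
  refine posDef_sum ?_ fun i hi => (hA i).smul ((hw i).lt_of_ne' (mem_filter.mp hi).2)
  exact nonempty_of_sum_ne_zero (by rwa [sum_filter_ne_zero])

theorem Matrix.sub_mulVec_sum_smul_mulVec {ι n R : Type*} [Fintype ι] [Fintype n] [DecidableEq n]
    [CommRing R] {B : Matrix n n R} {Q : ι → Matrix n n R} {w : ι → R} (h : B * ∑ i, w i • Q i = 1)
    (v : n → R) (y : ι → n → R) :
    v - B *ᵥ ∑ i, w i • (Q i *ᵥ y i) = ∑ i, w i • ((B * Q i) *ᵥ (v - y i)) := by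
  have hv : B *ᵥ ∑ i, w i • (Q i *ᵥ v) = v := by
    simp_rw [← smul_mulVec, ← sum_mulVec, mulVec_mulVec, h, one_mulVec]
  calc v - B *ᵥ ∑ i, w i • (Q i *ᵥ y i)
      = B *ᵥ ∑ i, w i • (Q i *ᵥ v) - B *ᵥ ∑ i, w i • (Q i *ᵥ y i) := by rw [hv]
    _ = B *ᵥ ∑ i, w i • (Q i *ᵥ (v - y i)) := by
        simp_rw [← mulVec_sub, ← sum_sub_distrib, ← smul_sub, ← mulVec_sub]
    _ = ∑ i, w i • ((B * Q i) *ᵥ (v - y i)) := by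
        simp_rw [mulVec_sum, mulVec_smul, mulVec_mulVec]

theorem Matrix.sum_smul_mul_inv_mul_transpose {ι n R : Type*} [Fintype ι] [Fintype n]
    [DecidableEq n] [CommRing R] {B : Matrix n n R} {P : ι → Matrix n n R} {w : ι → R}
    (hP : ∀ i, IsUnit (P i)) (hP_symm : ∀ i, (P i).IsSymm) (hB_symm : B.IsSymm)
    (h : B * ∑ i, w i • (P i)⁻¹ = 1) :
    ∑ i, w i • (B * (P i)⁻¹ * P i * (B * (P i)⁻¹)ᵀ) = B := by
  have hterm : ∀ i, B * (P i)⁻¹ * P i * (B * (P i)⁻¹)ᵀ = B * (P i)⁻¹ * B := fun i => by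
    rw [transpose_mul, transpose_nonsing_inv, (hP_symm i).eq, hB_symm.eq, Matrix.mul_assoc B,
      nonsing_inv_mul _ ((isUnit_iff_isUnit_det _).mp (hP i)), Matrix.mul_one, Matrix.mul_assoc]
  calc ∑ i, w i • (B * (P i)⁻¹ * P i * (B * (P i)⁻¹)ᵀ)
      = B * (∑ i, w i • (P i)⁻¹) * B := by
        simp_rw [hterm, Matrix.mul_sum, Matrix.sum_mul, mul_smul_comm, smul_mul_assoc]
    _ = B := by rw [h, Matrix.one_mul]

section SecondMoment

variable {Ω n : Type*} [MeasurableSpace Ω] {μ : Measure Ω}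

noncomputable def secondMoment (μ : Measure Ω) (e : Ω → n → ℝ) : Matrix n n ℝ :=
  of fun k l => ∫ ω, e ω k * e ω l ∂μ

def HasFiniteSecondMoment (μ : Measure Ω) (e : Ω → n → ℝ) : Prop :=
  ∀ k l, Integrable (fun ω => e ω k * e ω l) μ

theorem secondMoment_isHermitian (μ : Measure Ω) (e : Ω → n → ℝ) :
    (secondMoment μ e).IsHermitian := by
  ext k l
  simp only [conjTranspose_apply, secondMoment, of_apply, star_trivial, mul_comm]

variable [Fintype n]

namespace HasFiniteSecondMoment

variable {e : Ω → n → ℝ}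

theorem integrable_dotProduct_mul (he : HasFiniteSecondMoment μ e) (a b : n → ℝ) :
    Integrable (fun ω => (a ⬝ᵥ e ω) * (b ⬝ᵥ e ω)) μ := by
  simp_rw [dotProduct_mul_dotProduct_eq_sum]
  exact integrable_finsetSum _ fun k _ => integrable_finsetSum _ fun l _ =>
    (he k l).const_mul _

theorem integral_dotProduct_mul (he : HasFiniteSecondMoment μ e) (a b : n → ℝ) :
    ∫ ω, (a ⬝ᵥ e ω) * (b ⬝ᵥ e ω) ∂μ = a ⬝ᵥ secondMoment μ e *ᵥ b := by
  simp_rw [dotProduct_mul_dotProduct_eq_sum]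
  rw [integral_finsetSum _ fun k _ => integrable_finsetSum _ fun l _ => (he k l).const_mul _]
  simp_rw [integral_finsetSum _ fun l _ => (he _ l).const_mul _, integral_const_mul]
  simp only [secondMoment, dotProduct, mulVec, of_apply, mul_sum]
  exact sum_congr rfl fun k _ => sum_congr rfl fun l _ => by ring

theorem integral_dotProduct_sq (he : HasFiniteSecondMoment μ e) (z : n → ℝ) :
    ∫ ω, (z ⬝ᵥ e ω) ^ 2 ∂μ = z ⬝ᵥ secondMoment μ e *ᵥ z := by
  simp_rw [sq, he.integral_dotProduct_mul]

theorem integrable_dotProduct_sq (he : HasFiniteSecondMoment μ e) (z : n → ℝ) :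
    Integrable (fun ω => (z ⬝ᵥ e ω) ^ 2) μ := by
  simpa only [sq] using he.integrable_dotProduct_mul z z

theorem mulVec {κ : Type*} (he : HasFiniteSecondMoment μ e) (A : Matrix κ n ℝ) :
    HasFiniteSecondMoment μ fun ω => A *ᵥ e ω :=
  fun a b => he.integrable_dotProduct_mul (A a) (A b)

theorem secondMoment_mulVec {κ : Type*} [Fintype κ] (he : HasFiniteSecondMoment μ e)
    (A : Matrix κ n ℝ) : secondMoment μ (fun ω => A *ᵥ e ω) = A * secondMoment μ e * Aᵀ := by
  ext a b
  change ∫ ω, (A a ⬝ᵥ e ω) * (A b ⬝ᵥ e ω) ∂μ = _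
  rw [he.integral_dotProduct_mul, dotProduct_mulVec, mul_apply]
  rfl

end HasFiniteSecondMoment

theorem secondMoment_sum_smul_le {ι : Type*} [Fintype ι] {f : ι → Ω → n → ℝ} {w : ι → ℝ}
    (hw : ∀ i, 0 ≤ w i) (hw_sum : ∑ i, w i = 1) (hf : ∀ i, HasFiniteSecondMoment μ (f i))
    (hf_sum : HasFiniteSecondMoment μ fun ω => ∑ i, w i • f i ω) :
    secondMoment μ (fun ω => ∑ i, w i • f i ω) ≤ ∑ i, w i • secondMoment μ (f i) := by
  rw [le_iff, posSemidef_iff_dotProduct_mulVec]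
  refine ⟨.sub (isSelfAdjoint_sum _ fun i _ => (secondMoment_isHermitian μ (f i)).smul (.all _))
    (secondMoment_isHermitian _ _), fun z => ?_⟩
  rw [star_trivial, sub_mulVec, dotProduct_sub, sub_nonneg, sum_mulVec, dotProduct_sum]
  simp_rw [smul_mulVec, dotProduct_smul, smul_eq_mul, ← (hf _).integral_dotProduct_sq,
    ← hf_sum.integral_dotProduct_sq, dotProduct_sum, dotProduct_smul, smul_eq_mul]
  calc ∫ ω, (∑ i, w i * (z ⬝ᵥ f i ω)) ^ 2 ∂μ
      ≤ ∫ ω, ∑ i, w i * (z ⬝ᵥ f i ω) ^ 2 ∂μ := by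
        refine integral_mono ?_ ?_ fun ω => ?_
        · simpa only [dotProduct_sum, dotProduct_smul, smul_eq_mul] using
            hf_sum.integrable_dotProduct_sq z
        · exact integrable_finsetSum _ fun i _ => ((hf i).integrable_dotProduct_sq z).const_mul _
        · exact (even_two.convexOn_pow).map_sum_le (fun i _ => hw i) hw_sum (by simp)
    _ = ∑ i, w i * ∫ ω, (z ⬝ᵥ f i ω) ^ 2 ∂μ := by
        rw [integral_finsetSum _ fun i _ => ((hf i).integrable_dotProduct_sq z).const_mul _]
        simp_rw [integral_const_mul]

end SecondMoment

theorem covariance_intersection_consistent_general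
    {Ω : Type*} [MeasureSpace Ω]
    {n m : ℕ} (x : Ω → Fin n → ℝ) (xe : Fin m → Ω → Fin n → ℝ)
    (P : Fin m → Matrix (Fin n) (Fin n) ℝ) (hP : ∀ i, (P i).PosDef)
    (w : Fin m → ℝ) (hw_nonneg : ∀ i, 0 ≤ w i) (hw_sum : ∑ i, w i = 1)
    (hint : ∀ i, ∀ k l, Integrable fun ω => (x ω k - xe i ω k) * (x ω l - xe i ω l))
    (hcons : ∀ i,
      (P i - Matrix.of fun k l => ∫ ω, (x ω k - xe i ω k) * (x ω l - xe i ω l)).PosSemidef)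
    (Pbar : Matrix (Fin n) (Fin n) ℝ) (hPbar : Pbar = (∑ i, w i • (P i)⁻¹)⁻¹)
    (xbar : Ω → Fin n → ℝ)
    (hxbar : ∀ ω, xbar ω = Pbar *ᵥ ∑ i, w i • ((P i)⁻¹ *ᵥ xe i ω))
    (hint' : ∀ k l, Integrable fun ω => (x ω k - xbar ω k) * (x ω l - xbar ω l)) :
    (Pbar - Matrix.of fun k l => ∫ ω, (x ω k - xbar ω k) * (x ω l - xbar ω l)).PosSemidef := by
  have hS : (∑ i, w i • (P i)⁻¹).PosDef :=
    posDef_sum_smul (fun i => (hP i).inv) hw_nonneg (hw_sum ▸ one_ne_zero)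
  have hPbar_inv : Pbar * ∑ i, w i • (P i)⁻¹ = 1 :=
    hPbar ▸ nonsing_inv_mul _ ((isUnit_iff_isUnit_det _).mp hS.isUnit)
  have hint_i : ∀ i, HasFiniteSecondMoment volume fun ω => x ω - xe i ω := hint
  set A := fun i => Pbar * (P i)⁻¹
  have herr : (fun ω => x ω - xbar ω) = fun ω => ∑ i, w i • (A i *ᵥ (x ω - xe i ω)) :=
    funext fun ω => hxbar ω ▸ sub_mulVec_sum_smul_mulVec hPbar_inv _ _
  change secondMoment volume (fun ω => x ω - xbar ω) ≤ Pbar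
  calc secondMoment volume (fun ω => x ω - xbar ω)
      ≤ ∑ i, w i • secondMoment volume (fun ω => A i *ᵥ (x ω - xe i ω)) :=
        herr ▸ secondMoment_sum_smul_le hw_nonneg hw_sum (fun i => (hint_i i).mulVec (A i))
          (herr ▸ hint')
    _ = ∑ i, w i • (A i * secondMoment volume (fun ω => x ω - xe i ω) * (A i)ᵀ) := by
        simp_rw [(hint_i _).secondMoment_mulVec]
    _ ≤ ∑ i, w i • (A i * P i * (A i)ᵀ) := sum_le_sum fun i _ =>
        smul_le_smul_of_nonneg_left (mul_mul_transpose_le_mul_mul_transpose (hcons i) _)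
          (hw_nonneg i)
    _ = Pbar := sum_smul_mul_inv_mul_transpose (fun i => (hP i).isUnit)
      (fun i => isHermitian_iff_isSymm.mp (hP i).isHermitian)
      (isHermitian_iff_isSymm.mp (hPbar ▸ hS.inv.isHermitian)) hPbar_inv

/-- Covariance intersection is consistent: if each estimate `(xᵢ, Pᵢ)`
satisfies `E[(x - xᵢ)(x - xᵢ)ᵀ] ⪯ Pᵢ`, weights `wᵢ ≥ 0` sum to 1, and the fused
estimate has inverse covariance `P̄⁻¹ = ∑ wᵢ Pᵢ⁻¹` and mean
`x̄ = P̄ ∑ wᵢ Pᵢ⁻¹ xᵢ`, then `E[(x - x̄)(x - x̄)ᵀ] ⪯ P̄`. -/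
theorem covariance_intersection_consistent
    {Ω : Type*} [MeasureSpace Ω] [IsProbabilityMeasure (volume : Measure Ω)]
    {n m : ℕ} (x : Ω → Fin n → ℝ) (xe : Fin m → Ω → Fin n → ℝ)
    (P : Fin m → Matrix (Fin n) (Fin n) ℝ) (hP : ∀ i, (P i).PosDef)
    (w : Fin m → ℝ) (hw_nonneg : ∀ i, 0 ≤ w i) (hw_sum : ∑ i, w i = 1)
    (hint : ∀ i, ∀ k l, Integrable fun ω => (x ω k - xe i ω k) * (x ω l - xe i ω l))
    (hcons : ∀ i,
      (P i - Matrix.of fun k l => ∫ ω, (x ω k - xe i ω k) * (x ω l - xe i ω l)).PosSemidef)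
    (Pbar : Matrix (Fin n) (Fin n) ℝ) (hPbar : Pbar = (∑ i, w i • (P i)⁻¹)⁻¹)
    (xbar : Ω → Fin n → ℝ)
    (hxbar : ∀ ω, xbar ω = Pbar *ᵥ ∑ i, w i • ((P i)⁻¹ *ᵥ xe i ω))
    (hint' : ∀ k l, Integrable fun ω => (x ω k - xbar ω k) * (x ω l - xbar ω l)) :
    (Pbar - Matrix.of fun k l => ∫ ω, (x ω k - xbar ω k) * (x ω l - xbar ω l)).PosSemidef :=
  covariance_intersection_consistent_general x xe P hP w hw_nonneg hw_sum hint hcons Pbar hPbar xbar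
    hxbar hint'
end

section
/- For positive definite matrices, the weighted harmonic-mean consistency inequality holds: if w_i ≥ 0 sum to 1, P_i ≻ 0, and vectors e_i satisfy the fused error e = P̄ ∑_i w_i P_i^{-1} e_i with P̄ = (∑_i w_i P_i^{-1})^{-1}, then e e^T ⪯ P̄ (∑_i w_i P_i^{-1} e_i e_i^T P_i^{-1}) P̄ ⪯ P̄ · max_i (e_i^T P_i^{-1} e_i) in an appropriate sense; in particular (∑_i w_i P_i^{-1} e_i)^T P̄ (∑_i w_i P_i^{-1} e_i) ≤ ∑_i w_i e_i^T P_i^{-1} e_i. -/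
/-!
Write `uᵢ = Pᵢ⁻¹ eᵢ` and `s = ∑ wᵢ uᵢ`. The matrix inequality is the congruence by `P̄` of
`∑ wᵢ uᵢ uᵢᵀ - s sᵀ = ∑ wᵢ (uᵢ - s)(uᵢ - s)ᵀ ⪰ 0`, a weighted covariance. The scalar inequality
is a completion of the square: summing `0 ≤ (eᵢ - y)ᵀ Pᵢ⁻¹ (eᵢ - y)` with weights `wᵢ` at the
minimiser `y = P̄ s` leaves `∑ wᵢ eᵢᵀ Pᵢ⁻¹ eᵢ - sᵀ P̄ s ≥ 0`.
-/

open Matrix Finset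

namespace Matrix

variable {n ι : Type*} [Fintype ι]

theorem sum_smul_vecMulVec_sub_mean {α : Type*} [CommRing α] (u : ι → n → α) {w : ι → α}
    (hw : ∑ i, w i = 1) :
    ∑ i, w i • vecMulVec (u i - ∑ j, w j • u j) (u i - ∑ j, w j • u j) =
      ∑ i, w i • vecMulVec (u i) (u i) - vecMulVec (∑ j, w j • u j) (∑ j, w j • u j) := by
  ext a b
  simp only [sum_apply, smul_apply, vecMulVec_apply, Finset.sum_apply, Pi.sub_apply,
    Pi.smul_apply, smul_eq_mul, sub_apply]
  set X := ∑ j, w j * u j a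
  set Y := ∑ j, w j * u j b
  have expand : ∀ i, w i * ((u i a - X) * (u i b - Y)) =
      w i * (u i a * u i b) - w i * u i a * Y - X * (w i * u i b) + X * Y * w i := fun i => by
    ring
  simp only [expand, sum_add_distrib, sum_sub_distrib, ← sum_mul, ← mul_sum, hw]
  ring

theorem posDef_sum_smul_s6 {A : ι → Matrix n n ℝ} {w : ι → ℝ}
    (hA : ∀ i, (A i).PosDef) (hw : ∀ i, 0 ≤ w i) (hw_pos : 0 < ∑ i, w i) :
    (∑ i, w i • A i).PosDef := by
  classical
  obtain ⟨i₀, -, hi₀⟩ := exists_lt_of_sum_lt (s := univ) (f := 0) (g := w) (by simpa using hw_pos)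
  rw [← add_sum_erase _ _ (mem_univ i₀)]
  exact ((hA i₀).smul hi₀).add_posSemidef
    (posSemidef_sum _ fun i _ => (hA i).posSemidef.smul (hw i))

variable [Fintype n]

theorem posSemidef_sum_smul_vecMulVec_sub (u : ι → n → ℝ) {w : ι → ℝ}
    (hw : ∀ i, 0 ≤ w i) (hw_sum : ∑ i, w i = 1) :
    (∑ i, w i • vecMulVec (u i) (u i) -
      vecMulVec (∑ i, w i • u i) (∑ i, w i • u i)).PosSemidef := by
  rw [← sum_smul_vecMulVec_sub_mean u hw_sum]
  exact posSemidef_sum _ fun i _ => (posSemidef_vecMulVec_self_star _).smul (hw i)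

theorem IsSymm.mul_vecMulVec_mul {α : Type*} [CommSemiring α] {A : Matrix n n α} (hA : A.IsSymm)
    (x : n → α) :
    A * vecMulVec x x * A = vecMulVec (A *ᵥ x) (A *ᵥ x) := by
  rw [mul_vecMulVec, vecMulVec_mul, ← mulVec_transpose, hA.eq]

theorem PosSemidef.two_mul_dotProduct_mulVec_sub_le {Q : Matrix n n ℝ} (hQ : Q.PosSemidef)
    (x y : n → ℝ) : 2 * (y ⬝ᵥ Q *ᵥ x) - y ⬝ᵥ Q *ᵥ y ≤ x ⬝ᵥ Q *ᵥ x := by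
  have h := hQ.dotProduct_mulVec_nonneg (x - y)
  have hsymm : x ⬝ᵥ Q *ᵥ y = y ⬝ᵥ Q *ᵥ x := by
    rw [dotProduct_mulVec, ← mulVec_transpose, (isHermitian_iff_isSymm.mp hQ.isHermitian).eq,
      dotProduct_comm]
  simp only [star_trivial, mulVec_sub, dotProduct_sub, sub_dotProduct, hsymm] at h
  linarith

theorem two_mul_dotProduct_sum_sub_le {Q : ι → Matrix n n ℝ} (hQ : ∀ i, (Q i).PosSemidef)
    {w : ι → ℝ} (hw : ∀ i, 0 ≤ w i) (e : ι → n → ℝ) (y : n → ℝ) :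
    2 * (y ⬝ᵥ ∑ i, w i • (Q i *ᵥ e i)) - y ⬝ᵥ (∑ i, w i • Q i) *ᵥ y ≤
      ∑ i, w i * (e i ⬝ᵥ Q i *ᵥ e i) := by
  simp only [sum_mulVec, dotProduct_sum, smul_mulVec, dotProduct_smul, smul_eq_mul, mul_sum,
    ← sum_sub_distrib]
  refine sum_le_sum fun i _ => ?_
  nlinarith [mul_le_mul_of_nonneg_left ((hQ i).two_mul_dotProduct_mulVec_sub_le (e i) y) (hw i)]

end Matrix

/-- Weighted harmonic-mean consistency inequality for positive definite
matrices. With `P̄ = (∑ wᵢ Pᵢ⁻¹)⁻¹` and fused error `e = P̄ ∑ wᵢ Pᵢ⁻¹ eᵢ`, one has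
`e eᵀ ⪯ P̄ (∑ wᵢ Pᵢ⁻¹ eᵢ eᵢᵀ Pᵢ⁻¹) P̄`, and in particular the Jensen-type inequality
`(∑ wᵢ Pᵢ⁻¹ eᵢ)ᵀ P̄ (∑ wᵢ Pᵢ⁻¹ eᵢ) ≤ ∑ wᵢ eᵢᵀ Pᵢ⁻¹ eᵢ`. -/
theorem harmonic_mean_consistency {n m : ℕ}
    (e : Fin m → Fin n → ℝ) (P : Fin m → Matrix (Fin n) (Fin n) ℝ)
    (hP : ∀ i, (P i).PosDef)
    (w : Fin m → ℝ) (hw_nonneg : ∀ i, 0 ≤ w i) (hw_sum : ∑ i, w i = 1)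
    (Pbar : Matrix (Fin n) (Fin n) ℝ) (hPbar : Pbar = (∑ i, w i • (P i)⁻¹)⁻¹)
    (s : Fin n → ℝ) (hs : s = ∑ i, w i • ((P i)⁻¹ *ᵥ e i))
    (ebar : Fin n → ℝ) (hebar : ebar = Pbar *ᵥ s) :
    (Pbar * (∑ i, w i • ((P i)⁻¹ * vecMulVec (e i) (e i) * (P i)⁻¹)) * Pbar -
        vecMulVec ebar ebar).PosSemidef ∧
      s ⬝ᵥ Pbar *ᵥ s ≤ ∑ i, w i * (e i ⬝ᵥ (P i)⁻¹ *ᵥ e i) := by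
  have hQ : ∀ i, ((P i)⁻¹).PosDef := fun i => (hP i).inv
  have hS : (∑ i, w i • (P i)⁻¹).PosDef := posDef_sum_smul_s6 hQ hw_nonneg (hw_sum ▸ one_pos)
  have hPbar_symm : Pbar.IsSymm := isHermitian_iff_isSymm.mp (hPbar ▸ hS.inv).isHermitian
  constructor
  · have hcov := (posSemidef_sum_smul_vecMulVec_sub (fun i => (P i)⁻¹ *ᵥ e i) hw_nonneg
      hw_sum).mul_mul_conjTranspose_same Pbar
    simp_rw [fun i => (isHermitian_iff_isSymm.mp (hQ i).isHermitian).mul_vecMulVec_mul (e i),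
      hebar, ← hPbar_symm.mul_vecMulVec_mul, ← Matrix.sub_mul, ← Matrix.mul_sub, hs]
    rwa [conjTranspose_eq_transpose_of_trivial, hPbar_symm.eq] at hcov
  · have hSPbar : (∑ i, w i • (P i)⁻¹) *ᵥ (Pbar *ᵥ s) = s := by
      rw [mulVec_mulVec, hPbar, mul_nonsing_inv _ ((isUnit_iff_isUnit_det _).mp hS.isUnit),
        one_mulVec]
    have h := two_mul_dotProduct_sum_sub_le (fun i => (hQ i).posSemidef) hw_nonneg e (Pbar *ᵥ s)
    rw [← hs, hSPbar, dotProduct_comm] at h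
    linarith
end

section
/- The information-filter prediction map f(Y) = (A^{-1})^T Y A^{-1} - (A^{-1})^T Y (Y + A^T Q^{-1} A)^{-1} Y A^{-1} is monotone with respect to the Loewner order: if 0 ⪯ Y_1 ⪯ Y_2 then f(Y_1) ⪯ f(Y_2). -/
/-!
With `M = Aᵀ Q⁻¹ A ≻ 0`, the identity `Y - Y (Y + M)⁻¹ Y = M - M (Y + M)⁻¹ M` moves `Y` out of
the outer factors, so `f(Y₂) - f(Y₁) = (M A⁻¹)ᵀ ((Y₁ + M)⁻¹ - (Y₂ + M)⁻¹) (M A⁻¹)`, and the claim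
reduces to the Loewner antitonicity of the inverse on positive definite matrices.
-/

open Matrix
open scoped ComplexOrder

namespace Matrix

variable {m : Type*} [Fintype m] [DecidableEq m]

theorem sub_mul_inv_add_mul_self {α : Type*} [CommRing α] {X M : Matrix m m α}
    (h : IsUnit (X + M)) : X - X * (X + M)⁻¹ * X = M - M * (X + M)⁻¹ * M := by
  have hr : (X + M) * (X + M)⁻¹ = 1 := mul_nonsing_inv _ ((isUnit_iff_isUnit_det _).mp h)
  have hl : (X + M)⁻¹ * (X + M) = 1 := nonsing_inv_mul _ ((isUnit_iff_isUnit_det _).mp h)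
  calc X - X * (X + M)⁻¹ * X
      = (X + M) * (X + M)⁻¹ * X - X * (X + M)⁻¹ * X := by rw [hr, Matrix.one_mul]
    _ = M * ((X + M)⁻¹ * (X + M)) - M * (X + M)⁻¹ * M := by noncomm_ring
    _ = M - M * (X + M)⁻¹ * M := by rw [hl, Matrix.mul_one]

variable {𝕜 : Type*} [RCLike 𝕜]

theorem PosDef.inv_sub_inv_posSemidef {P R : Matrix m m 𝕜} (hP : P.PosDef)
    (hPR : (R - P).PosSemidef) : (P⁻¹ - R⁻¹).PosSemidef := by
  have hR : R.PosDef := by simpa using hP.add_posSemidef hPR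
  have := hP.isUnit.invertible
  have := hR.isUnit.invertible
  have hD : (P⁻¹ - R⁻¹)ᴴ = P⁻¹ - R⁻¹ := by
    rw [conjTranspose_sub, hP.1.inv.eq, hR.1.inv.eq]
  -- `P⁻¹ - R⁻¹ = D P D + R⁻¹ (R - P) R⁻¹` with `D = P⁻¹ - R⁻¹`, a sum of congruences of `P`, `R - P`.
  have hsplit : (P⁻¹ - R⁻¹)ᴴ * P * (P⁻¹ - R⁻¹) + (R⁻¹)ᴴ * (R - P) * R⁻¹ = P⁻¹ - R⁻¹ := by
    simp only [hD, hR.1.inv.eq, Matrix.sub_mul, Matrix.mul_sub, Matrix.mul_assoc,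
      mul_inv_of_invertible, inv_mul_of_invertible, Matrix.mul_one, Matrix.one_mul]
    abel
  rw [← hsplit]
  exact (hP.posSemidef.conjTranspose_mul_mul_same _).add (hPR.conjTranspose_mul_mul_same _)

end Matrix

theorem information_prediction_monotone_general {n : ℕ}
    (A Q Y₁ Y₂ : Matrix (Fin n) (Fin n) ℝ)
    (hA : IsUnit A) (hQ : Q.PosDef)
    (hY₁ : Y₁.PosSemidef) (hle : (Y₂ - Y₁).PosSemidef)
    (f : Matrix (Fin n) (Fin n) ℝ → Matrix (Fin n) (Fin n) ℝ)
    (hf : f = fun Y => A⁻¹ᵀ * Y * A⁻¹ - A⁻¹ᵀ * Y * (Y + Aᵀ * Q⁻¹ * A)⁻¹ * Y * A⁻¹) :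
    (f Y₂ - f Y₁).PosSemidef := by
  set M := Aᵀ * Q⁻¹ * A
  have hM : M.PosDef := by
    simpa using hQ.inv.conjTranspose_mul_mul_same (mulVec_injective_iff_isUnit.mpr hA)
  have hP₁ : (Y₁ + M).PosDef := PosDef.posSemidef_add hY₁ hM
  have hP₂ : (Y₂ + M).PosDef := by
    rw [show Y₂ + M = Y₁ + M + (Y₂ - Y₁) by abel]
    exact hP₁.add_posSemidef hle
  have hf_eq : ∀ Y, (Y + M).PosDef → f Y = A⁻¹ᵀ * (M - M * (Y + M)⁻¹ * M) * A⁻¹ := by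
    intro Y hY
    rw [hf, ← sub_mul_inv_add_mul_self hY.isUnit]
    noncomm_ring
  have hdiff : f Y₂ - f Y₁ = (M * A⁻¹)ᴴ * ((Y₁ + M)⁻¹ - (Y₂ + M)⁻¹) * (M * A⁻¹) := by
    rw [hf_eq Y₂ hP₂, hf_eq Y₁ hP₁, conjTranspose_mul, conjTranspose_eq_transpose_of_trivial,
      hM.1.eq]
    noncomm_ring
  rw [hdiff]
  refine (hP₁.inv_sub_inv_posSemidef ?_).conjTranspose_mul_mul_same _
  rwa [add_sub_add_right_eq_sub]

/-- The information-filter prediction map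
`f(Y) = (A⁻¹)ᵀ Y A⁻¹ - (A⁻¹)ᵀ Y (Y + Aᵀ Q⁻¹ A)⁻¹ Y A⁻¹`
is monotone with respect to the Loewner order:
if `0 ⪯ Y₁ ⪯ Y₂` then `f(Y₁) ⪯ f(Y₂)`. -/
theorem information_prediction_monotone {n : ℕ}
    (A Q Y₁ Y₂ : Matrix (Fin n) (Fin n) ℝ)
    (hA : IsUnit A) (hQ : Q.PosDef)
    (hY₁ : Y₁.PosSemidef) (hY₂ : Y₂.PosSemidef) (hle : (Y₂ - Y₁).PosSemidef)
    (f : Matrix (Fin n) (Fin n) ℝ → Matrix (Fin n) (Fin n) ℝ)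
    (hf : f = fun Y => A⁻¹ᵀ * Y * A⁻¹ - A⁻¹ᵀ * Y * (Y + Aᵀ * Q⁻¹ * A)⁻¹ * Y * A⁻¹) :
    (f Y₂ - f Y₁).PosSemidef :=
  information_prediction_monotone_general A Q Y₁ Y₂ hA hQ hY₁ hle f hf
end

section
/- Jensen-type inequality for the inverse quadratic form: for symmetric positive definite matrices S_1,...,S_m, vectors v_1,...,v_m, and weights w_i ≥ 0 summing to 1, (∑_i w_i v_i)^T (∑_i w_i S_i)^{-1} (∑_i w_i v_i) ≤ ∑_i w_i v_i^T S_i^{-1} v_i. -/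
open Matrix Finset

/-!
For positive definite `S`, the form `vᵀ S⁻¹ v` is the supremum of `2 uᵀv - uᵀ S u` over `u`
(complete the square in the `S⁻¹`-norm), attained at `u = S⁻¹ v`. With `T = ∑ wᵢ Sᵢ` and
`z = ∑ wᵢ vᵢ`, insert the single maximiser `u = T⁻¹ z` of the averaged problem into every term:
the right-hand side dominates `∑ wᵢ (2 uᵀvᵢ - uᵀ Sᵢ u) = 2 uᵀz - uᵀ T u = zᵀ T⁻¹ z`.
-/

namespace Matrix

variable {ι : Type*} [Fintype ι] [DecidableEq ι]

-- For singular `M` both sides vanish, since then `M⁻¹ = 0`.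
theorem dotProduct_inv_mulVec_eq_two_mul_sub {R : Type*} [CommRing R] (M : Matrix ι ι R)
    (z : ι → R) :
    z ⬝ᵥ M⁻¹ *ᵥ z = 2 * (M⁻¹ *ᵥ z ⬝ᵥ z) - M⁻¹ *ᵥ z ⬝ᵥ M *ᵥ (M⁻¹ *ᵥ z) := by
  by_cases hM : IsUnit M.det
  · rw [mulVec_mulVec, mul_nonsing_inv M hM, one_mulVec, dotProduct_comm z]
    ring
  · simp [nonsing_inv_apply_not_isUnit M hM]

theorem PosDef.two_mul_dotProduct_sub_le_dotProduct_inv_mulVec {M : Matrix ι ι ℝ}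
    (hM : M.PosDef) (u v : ι → ℝ) :
    2 * (u ⬝ᵥ v) - u ⬝ᵥ M *ᵥ u ≤ v ⬝ᵥ M⁻¹ *ᵥ v := by
  have hdet : IsUnit M.det := isUnit_iff_ne_zero.mpr hM.det_pos.ne'
  have hsq : 0 ≤ (v - M *ᵥ u) ⬝ᵥ M⁻¹ *ᵥ (v - M *ᵥ u) := by
    simpa using hM.inv.posSemidef.dotProduct_mulVec_nonneg (v - M *ᵥ u)
  have hcross : M *ᵥ u ⬝ᵥ M⁻¹ *ᵥ v = u ⬝ᵥ v := by
    rw [dotProduct_comm, dotProduct_mulVec, ← mulVec_transpose,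
      ← conjTranspose_eq_transpose_of_trivial, hM.isHermitian.eq, mulVec_mulVec,
      mul_nonsing_inv M hdet, one_mulVec, dotProduct_comm]
  rw [mulVec_sub, mulVec_mulVec, nonsing_inv_mul M hdet, one_mulVec, sub_dotProduct,
    dotProduct_sub, dotProduct_sub, hcross, dotProduct_comm (M *ᵥ u), dotProduct_comm v u] at hsq
  linarith

end Matrix

theorem jensen_inverse_quadratic_form_general {n m : ℕ}
    (S : Fin m → Matrix (Fin n) (Fin n) ℝ) (hS : ∀ i, (S i).PosDef)
    (v : Fin m → Fin n → ℝ)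
    (w : Fin m → ℝ) (hw_nonneg : ∀ i, 0 ≤ w i) :
    (∑ i, w i • v i) ⬝ᵥ (∑ i, w i • S i)⁻¹ *ᵥ (∑ i, w i • v i) ≤
      ∑ i, w i * (v i ⬝ᵥ (S i)⁻¹ *ᵥ v i) := by
  set T := ∑ i, w i • S i
  set z := ∑ i, w i • v i
  set u := T⁻¹ *ᵥ z
  calc z ⬝ᵥ T⁻¹ *ᵥ z = 2 * (u ⬝ᵥ z) - u ⬝ᵥ T *ᵥ u := dotProduct_inv_mulVec_eq_two_mul_sub T z
    _ = ∑ i, w i * (2 * (u ⬝ᵥ v i) - u ⬝ᵥ S i *ᵥ u) := by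
      simp only [z, T, dotProduct_sum, sum_mulVec, smul_mulVec, dotProduct_smul, smul_eq_mul,
        mul_sum, ← sum_sub_distrib]
      exact sum_congr rfl fun i _ ↦ by ring
    _ ≤ ∑ i, w i * (v i ⬝ᵥ (S i)⁻¹ *ᵥ v i) :=
      sum_le_sum fun i _ ↦ mul_le_mul_of_nonneg_left
        ((hS i).two_mul_dotProduct_sub_le_dotProduct_inv_mulVec u (v i)) (hw_nonneg i)

/-- Jensen-type inequality for the inverse quadratic form: for
symmetric positive definite `Sᵢ`, vectors `vᵢ`, and weights `wᵢ ≥ 0` summing to 1,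
`(∑ wᵢ vᵢ)ᵀ (∑ wᵢ Sᵢ)⁻¹ (∑ wᵢ vᵢ) ≤ ∑ wᵢ vᵢᵀ Sᵢ⁻¹ vᵢ`. -/
theorem jensen_inverse_quadratic_form {n m : ℕ}
    (S : Fin m → Matrix (Fin n) (Fin n) ℝ) (hS : ∀ i, (S i).PosDef)
    (v : Fin m → Fin n → ℝ)
    (w : Fin m → ℝ) (hw_nonneg : ∀ i, 0 ≤ w i) (hw_sum : ∑ i, w i = 1) :
    (∑ i, w i • v i) ⬝ᵥ (∑ i, w i • S i)⁻¹ *ᵥ (∑ i, w i • v i) ≤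
      ∑ i, w i * (v i ⬝ᵥ (S i)⁻¹ *ᵥ v i) :=
  jensen_inverse_quadratic_form_general S hS v w hw_nonneg
end
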